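/- arXiv:2503.04124 — 2 statements merged into one kernel-verified Lean document; each statement's English description precedes it below -/
import Mathlib

section
/- Let G be a triangle-free simple graph on n vertices that contains a Hamiltonian path. Then γ_h(G) ≤ ⌈⌊n/2⌋/3⌉ + ⌈⌈n/2⌉/3⌉. -/
/-!
Number the vertices along the Hamiltonian path as `v₀, …, v_{n-1}`. Since `G` has no triangles,
`vᵢ` and `vᵢ₊₂` are non-adjacent vertices with a common neighbour, so they are at distance
exactly 2. Hence a vertex `vⱼ` is hop dominated as soon as `vⱼ₋₂` or `vⱼ₊₂` is chosen. The
even-indexed and the odd-indexed vertices thus form two paths of the "index step 2" relation,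
with `⌈n/2⌉` and `⌊n/2⌋` vertices, and a path on `m` vertices is dominated by `⌈m/3⌉` of them.
-/

/-- A set `S` of vertices is a hop dominating set of `G` if every vertex not in `S`
is at distance exactly 2 from some vertex of `S`. -/
def SimpleGraph.IsHopDominatingSet {V : Type*} (G : SimpleGraph V) (S : Finset V) : Prop :=
  ∀ v : V, v ∉ S → ∃ u ∈ S, G.dist u v = 2

/-- The hop domination number of `G`: the minimum cardinality of a hop dominating set. -/
noncomputable def SimpleGraph.hopDominationNumber {V : Type*} [Fintype V] [DecidableEq V]
    (G : SimpleGraph V) : ℕ :=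
  sInf {k : ℕ | ∃ S : Finset V, G.IsHopDominatingSet S ∧ S.card = k}

lemma Nat.exists_finset_card_le_dist_le_one (m : ℕ) :
    ∃ D : Finset ℕ, D.card ≤ (m + 2) / 3 ∧
      ∀ k < m, ∃ d ∈ D, d < m ∧ d ≤ k + 1 ∧ k ≤ d + 1 := by
  -- `3i + 1` covers the block `{3i, 3i+1, 3i+2}`; capping at `m - 1` handles a last short block
  refine ⟨(Finset.range ((m + 2) / 3)).image fun i => min (3 * i + 1) (m - 1), ?_, ?_⟩
  · exact Finset.card_image_le.trans (Finset.card_range _).le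
  · intro k hk
    refine ⟨min (3 * (k / 3) + 1) (m - 1),
      Finset.mem_image_of_mem _ (Finset.mem_range.mpr (by omega)), by omega, by omega, by omega⟩

lemma Nat.exists_finset_card_le_mem_or_dist_eq_two (n : ℕ) :
    ∃ T : Finset ℕ, T.card ≤ (n / 2 + 2) / 3 + ((n + 1) / 2 + 2) / 3 ∧
      ∀ j < n, j ∈ T ∨ ∃ t ∈ T, t < n ∧ (t + 2 = j ∨ j + 2 = t) := by
  obtain ⟨D₁, hD₁card, hD₁⟩ := exists_finset_card_le_dist_le_one (n / 2)
  obtain ⟨D₀, hD₀card, hD₀⟩ := exists_finset_card_le_dist_le_one ((n + 1) / 2)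
  refine ⟨D₁.image (fun d => 2 * d + 1) ∪ D₀.image (2 * ·), ?_, ?_⟩
  · calc _ ≤ (D₁.image (fun d => 2 * d + 1)).card + (D₀.image (2 * ·)).card :=
          Finset.card_union_le _ _
      _ ≤ D₁.card + D₀.card := add_le_add Finset.card_image_le Finset.card_image_le
      _ ≤ _ := add_le_add hD₁card hD₀card
  · intro j hj
    simp only [Finset.mem_union, Finset.mem_image]
    rcases Nat.even_or_odd' j with ⟨k, rfl | rfl⟩
    · obtain ⟨d, hd, hdm, hdk⟩ := hD₀ k (by omega)
      rcases eq_or_ne d k with rfl | hne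
      · exact .inl (.inr ⟨d, hd, rfl⟩)
      · exact .inr ⟨2 * d, .inr ⟨d, hd, rfl⟩, by omega, by omega⟩
    · obtain ⟨d, hd, hdm, hdk⟩ := hD₁ k (by omega)
      rcases eq_or_ne d k with rfl | hne
      · exact .inl (.inl ⟨d, hd, rfl⟩)
      · exact .inr ⟨2 * d + 1, .inl ⟨d, hd, rfl⟩, by omega, by omega⟩

namespace SimpleGraph

variable {V : Type*} {G : SimpleGraph V}

lemma dist_eq_two_of_adj_of_adj {u v w : V} (huw : G.Adj u w) (hwv : G.Adj w v) (hne : u ≠ v)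
    (hnadj : ¬G.Adj u v) : G.dist u v = 2 := by
  have hedist : G.edist u v = 2 :=
    edist_eq_two_iff.mpr ⟨hne, hnadj, w, (G.mem_commonNeighbors).mpr ⟨huw, hwv.symm⟩⟩
  rw [dist, hedist]
  rfl

lemma CliqueFree.dist_eq_two_of_adj_of_adj (hG : G.CliqueFree 3) {u v w : V} (huw : G.Adj u w)
    (hwv : G.Adj w v) (hne : u ≠ v) : G.dist u v = 2 :=
  SimpleGraph.dist_eq_two_of_adj_of_adj huw hwv hne fun huv => by
    classical exact hG {u, w, v} (is3Clique_triple_iff.mpr ⟨huw, huv, hwv⟩)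

lemma Walk.IsPath.dist_getVert_add_two (hG : G.CliqueFree 3) {u v : V} {p : G.Walk u v}
    (hp : p.IsPath) {i : ℕ} (hi : i + 2 ≤ p.length) :
    G.dist (p.getVert i) (p.getVert (i + 2)) = 2 :=
  hG.dist_eq_two_of_adj_of_adj (p.adj_getVert_succ (by omega)) (p.adj_getVert_succ (by omega))
    fun h => by have := hp.getVert_injOn (by simp; omega) (by simp; omega) h; omega

lemma Walk.IsHamiltonian.isHopDominatingSet_image_getVert [DecidableEq V]
    (hG : G.CliqueFree 3) {u v : V} {p : G.Walk u v} (hp : p.IsHamiltonian) {T : Finset ℕ}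
    (hT : ∀ j ≤ p.length, j ∈ T ∨ ∃ t ∈ T, t ≤ p.length ∧ (t + 2 = j ∨ j + 2 = t)) :
    G.IsHopDominatingSet (T.image p.getVert) := by
  intro w hw
  obtain ⟨j, rfl, hj⟩ := mem_support_iff_exists_getVert.mp (hp.mem_support w)
  rcases hT j hj with hjT | ⟨t, htT, ht, rfl | rfl⟩
  · exact absurd (Finset.mem_image_of_mem _ hjT) hw
  · exact ⟨_, Finset.mem_image_of_mem _ htT, hp.isPath.dist_getVert_add_two hG hj⟩
  · exact ⟨_, Finset.mem_image_of_mem _ htT,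
      dist_comm.trans (hp.isPath.dist_getVert_add_two hG ht)⟩

lemma hopDominationNumber_le_card [Fintype V] [DecidableEq V] {S : Finset V}
    (hS : G.IsHopDominatingSet S) : G.hopDominationNumber ≤ S.card :=
  Nat.sInf_le ⟨S, hS, rfl⟩

end SimpleGraph

theorem hop_domination_hamiltonian_path {V : Type*} [Fintype V] [DecidableEq V]
    (G : SimpleGraph V) (htf : G.CliqueFree 3)
    (hham : ∃ (u v : V) (p : G.Walk u v), p.IsHamiltonian) :
    G.hopDominationNumber ≤
      (Fintype.card V / 2 + 2) / 3 + ((Fintype.card V + 1) / 2 + 2) / 3 := by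
  obtain ⟨u, v, p, hp⟩ := hham
  have hlen : p.length + 1 = Fintype.card V := by
    have := Fintype.card_pos_iff.mpr ⟨u⟩
    rw [hp.length_eq]
    omega
  obtain ⟨T, hTcard, hT⟩ := Nat.exists_finset_card_le_mem_or_dist_eq_two (Fintype.card V)
  have hdom : G.IsHopDominatingSet (T.image p.getVert) :=
    hp.isHopDominatingSet_image_getVert htf fun j hj => by
      rcases hT j (by omega) with hjT | ⟨t, htT, htn, hjt⟩
      exacts [.inl hjT, .inr ⟨t, htT, by omega, hjt⟩]
  exact (SimpleGraph.hopDominationNumber_le_card hdom).trans (Finset.card_image_le.trans hTcard)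
end

section
/- Let G be a triangle-free simple graph on n vertices (n ≥ 3) that contains a Hamiltonian cycle. Then γ_h(G) ≤ 2⌈n/6⌉ if n is even, and γ_h(G) ≤ ⌈n/3⌉ if n is odd. -/
/-! Label the Hamiltonian cycle by `ZMod n`. As `G` has no triangles, two vertices two steps
apart on the cycle are at distance exactly `2`, so it suffices to dominate `ZMod n` by steps
of `±2`. For odd `n` these steps trace out a single cycle of length `n`, for even `n` two
cycles of length `n / 2`, and a cycle of length `m` is dominated by `⌈m / 3⌉` of its vertices. -/

def IsStepDominating {A : Type*} [AddGroup A] (c : A) (I : Finset A) : Prop :=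
  ∀ j, j ∈ I ∨ j + c ∈ I ∨ j - c ∈ I

theorem exists_path_dominating_set (m : ℕ) :
    ∃ J : Finset ℕ, J.card ≤ (m + 2) / 3 ∧ ∀ k < m, ∃ i ∈ J, k ≤ i + 1 ∧ i ≤ k + 1 := by
  refine ⟨(Finset.range ((m + 2) / 3)).image (fun t => 3 * t + 1),
    Finset.card_image_le.trans (Finset.card_range _).le, fun k hk => ?_⟩
  exact ⟨3 * (k / 3) + 1, Finset.mem_image_of_mem _ (Finset.mem_range.mpr (by omega)), by omega,
    by omega⟩

theorem exists_isStepDominating_card_le {A : Type*} [AddCommGroup A] [DecidableEq A] {c : A}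
    {S : Finset A} {m : ℕ} (hcover : ∀ j : A, ∃ k < m, ∃ r ∈ S, j = k • c + r) :
    ∃ I : Finset A, IsStepDominating c I ∧ I.card ≤ (m + 2) / 3 * S.card := by
  obtain ⟨J, hJcard, hJ⟩ := exists_path_dominating_set m
  refine ⟨(J ×ˢ S).image fun x => x.1 • c + x.2, fun j => ?_, ?_⟩
  · obtain ⟨k, hk, r, hr, rfl⟩ := hcover j
    obtain ⟨i, hi, hik⟩ := hJ k hk
    have hmem : i • c + r ∈ (J ×ˢ S).image fun x => x.1 • c + x.2 :=
      Finset.mem_image.mpr ⟨(i, r), Finset.mem_product.mpr ⟨hi, hr⟩, rfl⟩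
    rcases (by omega : i = k ∨ i = k + 1 ∨ i + 1 = k) with rfl | rfl | rfl
    · exact Or.inl hmem
    · exact Or.inr (Or.inl (by rwa [succ_nsmul, add_right_comm] at hmem))
    · exact Or.inr (Or.inr (by rwa [succ_nsmul, add_right_comm, add_sub_cancel_right]))
  · calc _ ≤ (J ×ˢ S).card := Finset.card_image_le
      _ = J.card * S.card := Finset.card_product _ _
      _ ≤ _ := Nat.mul_le_mul_right _ hJcard

theorem ZMod.exists_eq_nsmul_two_add {n m : ℕ} [NeZero n] (hn : n = m + m) (j : ZMod n) :
    ∃ k < m, ∃ r ∈ ({0, 1} : Finset (ZMod n)), j = k • 2 + r := by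
  have := ZMod.val_lt j
  refine ⟨j.val / 2, by omega, (j.val % 2 : ℕ), ?_, ?_⟩
  · rcases Nat.mod_two_eq_zero_or_one j.val with h | h <;> simp [h]
  · conv_lhs => rw [← ZMod.natCast_zmod_val j, ← Nat.div_add_mod j.val 2]
    push_cast
    rw [nsmul_eq_mul, mul_comm]

theorem ZMod.exists_eq_nsmul_two {n : ℕ} [NeZero n] (hn : Odd n) (j : ZMod n) :
    ∃ k < n, j = k • 2 := by
  set u := ZMod.unitOfCoprime 2 (Nat.coprime_two_left.mpr hn)
  refine ⟨((u⁻¹ : (ZMod n)ˣ) * j : ZMod n).val, ZMod.val_lt _, ?_⟩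
  have hu : (u : ZMod n) = 2 := by simp [u]
  rw [nsmul_eq_mul, ZMod.natCast_zmod_val, ← hu, mul_comm, Units.mul_inv_cancel_left]

namespace SimpleGraph

variable {V : Type*} [DecidableEq V] {G : SimpleGraph V}

theorem dist_eq_two_of_adj_of_adj_s7 (htf : G.CliqueFree 3) {a b c : V} (hab : G.Adj a b)
    (hbc : G.Adj b c) (hac : a ≠ c) : G.dist a c = 2 := by
  have hnadj : ¬ G.Adj a c := fun h => htf {a, b, c} (is3Clique_triple_iff.mpr ⟨hab, h, hbc⟩)
  have hedist : G.edist a c = 2 := edist_eq_two_iff.mpr ⟨hac, hnadj, b, hab, hbc.symm⟩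
  rw [dist, hedist]
  rfl

theorem Walk.IsHamiltonianCycle.exists_bijective_zmod [Fintype V] {v : V} {p : G.Walk v v}
    (hp : p.IsHamiltonianCycle) :
    ∃ f : ZMod (Fintype.card V) → V, f.Bijective ∧ ∀ i, G.Adj (f i) (f (i + 1)) := by
  set n := Fintype.card V
  have hlen : p.length = n := hp.length_eq
  have : NeZero n := ⟨(Fintype.card_pos_iff.mpr ⟨v⟩).ne'⟩
  have hwrap : ∀ k ≤ n, p.getVert (k % n) = p.getVert k := by
    intro k hk
    rcases hk.lt_or_eq with hk | rfl
    · rw [Nat.mod_eq_of_lt hk]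
    · rw [Nat.mod_self, getVert_zero, ← hlen, getVert_length]
  refine ⟨fun i => p.getVert i.val, ⟨fun i j hij => ?_, fun w => ?_⟩, fun i => ?_⟩
  · have := ZMod.val_lt i
    have := ZMod.val_lt j
    exact ZMod.val_injective n <| hp.isCycle.getVert_injOn'
      (show i.val ≤ p.length - 1 by omega) (show j.val ≤ p.length - 1 by omega) hij
  · obtain ⟨k, hkw, hk⟩ := mem_support_iff_exists_getVert.mp (hp.mem_support w)
    exact ⟨k, by simp only [ZMod.val_natCast, hwrap k (by omega), hkw]⟩
  · have hi : i.val < p.length := hlen.symm ▸ ZMod.val_lt i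
    have hsucc : (i + 1).val = (i.val + 1) % n := by
      rw [← ZMod.val_natCast, Nat.cast_add, ZMod.natCast_zmod_val, Nat.cast_one]
    simpa only [hsucc, hwrap _ (by omega : i.val + 1 ≤ n)] using p.adj_getVert_succ hi

theorem IsHopDominatingSet.hopDominationNumber_le [Fintype V] {S : Finset V}
    (hS : G.IsHopDominatingSet S) : G.hopDominationNumber ≤ S.card :=
  Nat.sInf_le ⟨S, hS, rfl⟩

theorem hopDominationNumber_le_of_isStepDominating [Fintype V] {A : Type*} [AddGroup A]
    {f : A → V} (hf : f.Surjective) {c : A} (hdist : ∀ i, G.dist (f i) (f (i + c)) = 2)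
    {I : Finset A} (hI : IsStepDominating c I) : G.hopDominationNumber ≤ I.card := by
  have hdom : G.IsHopDominatingSet (I.image f) := by
    intro w hw
    obtain ⟨j, rfl⟩ := hf w
    rcases hI j with h | h | h
    · exact absurd (Finset.mem_image_of_mem f h) hw
    · exact ⟨f (j + c), Finset.mem_image_of_mem f h, by rw [dist_comm, hdist]⟩
    · exact ⟨f (j - c), Finset.mem_image_of_mem f h, by simpa using hdist (j - c)⟩
  exact hdom.hopDominationNumber_le.trans Finset.card_image_le

end SimpleGraph

theorem hop_domination_hamiltonian_cycle {V : Type*} [Fintype V] [DecidableEq V]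
    (G : SimpleGraph V) (htf : G.CliqueFree 3) (hn : 3 ≤ Fintype.card V)
    (hham : ∃ (v : V) (p : G.Walk v v), p.IsHamiltonianCycle) :
    (Even (Fintype.card V) →
      G.hopDominationNumber ≤ 2 * ((Fintype.card V + 5) / 6)) ∧
    (Odd (Fintype.card V) →
      G.hopDominationNumber ≤ (Fintype.card V + 2) / 3) := by
  set n := Fintype.card V
  obtain ⟨v, p, hp⟩ := hham
  obtain ⟨f, hf, hadj⟩ := hp.exists_bijective_zmod
  have : NeZero n := ⟨by omega⟩
  have htwo : (2 : ZMod n) ≠ 0 := fun h =>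
    absurd (Nat.le_of_dvd two_pos ((ZMod.natCast_eq_zero_iff 2 n).mp (by exact_mod_cast h)))
      (by omega)
  have hdist : ∀ i, G.dist (f i) (f (i + 2)) = 2 := fun i =>
    G.dist_eq_two_of_adj_of_adj_s7 htf (hadj i)
      (by simpa only [add_assoc, one_add_one_eq_two] using hadj (i + 1))
      (hf.injective.ne (by simpa using htwo))
  have hγ : ∀ I : Finset (ZMod n), IsStepDominating 2 I → G.hopDominationNumber ≤ I.card :=
    fun _ => G.hopDominationNumber_le_of_isStepDominating hf.surjective hdist
  refine ⟨fun ⟨m, hm⟩ => ?_, fun hodd => ?_⟩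
  · obtain ⟨I, hI, hcard⟩ := exists_isStepDominating_card_le (ZMod.exists_eq_nsmul_two_add hm)
    calc G.hopDominationNumber ≤ I.card := hγ I hI
      _ ≤ (m + 2) / 3 * 2 := hcard.trans (Nat.mul_le_mul_left _ Finset.card_le_two)
      _ ≤ 2 * ((n + 5) / 6) := by omega
  · have hcover (j : ZMod n) : ∃ k < n, ∃ r ∈ ({0} : Finset (ZMod n)), j = k • 2 + r := by
      obtain ⟨k, hk, rfl⟩ := ZMod.exists_eq_nsmul_two hodd j
      exact ⟨k, hk, 0, Finset.mem_singleton_self 0, (add_zero _).symm⟩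
    obtain ⟨I, hI, hcard⟩ := exists_isStepDominating_card_le hcover
    simpa using (hγ I hI).trans hcard
end
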